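/- Let φ : F₂ → H₃(ℤ) be the homomorphism from the free group on x₁, x₂ to the discrete Heisenberg group of 3×3 upper unitriangular integer matrices sending x₁ to I + E₁₂ and x₂ to I + E₂₃ (E_{ij} the matrix unit). A word w = s_1⋯s_n in the alphabet {x₁^{±1}, x₂^{±1}} lies in the kernel of φ if and only if its lattice path is closed (p_n = 0) and its algebraic area A(w) = Σ_{k : s_k = x₂^{ε_k}} ε_k · (p_{k−1})₁ vanishes, where the sum is over the steps in the second coordinate direction, ε_k = ±1 is the sign of that step, and (p_{k−1})₁ is the first coordinate of the path at the moment of the step. -/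

import Mathlib

/-- Lattice points of `ℤ^d`. -/
abbrev Pt (d : ℕ) : Type := Fin d → ℤ

/-- The `i`-th standard basis vector of `ℤ^d`. -/
def latE (d : ℕ) (i : Fin d) : Pt d := fun j => if j = i then 1 else 0

/-- One step of a lattice path: the letter `(i, b)` moves by `eᵢ` if `b` and by `-eᵢ`
otherwise. -/
def stepFn (d : ℕ) (p : Pt d) (s : Fin d × Bool) : Pt d :=
  p + (if s.2 then latE d s.1 else -latE d s.1)

/-- Total displacement of a word (= endpoint of the associated lattice path started
at `0`). -/
def disp (d : ℕ) (w : List (Fin d × Bool)) : Pt d :=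
  (w.map fun s => if s.2 then latE d s.1 else -latE d s.1).sum

/-- The algebraic area `A_{ij}` of a lattice path starting at `p`: the sum, over the steps
in the `j`-th coordinate direction, of the sign of the step times the `i`-th coordinate of
the position just before the step. -/
def areaIJ (d : ℕ) (i j : Fin d) : Pt d → List (Fin d × Bool) → ℤ
  | _, [] => 0
  | p, s :: rest =>
      (if s.1 = j then (if s.2 then p i else -(p i)) else 0) + areaIJ d i j (stepFn d p s) rest

/-- `I + E₁₂` as a unit of the `3×3` integer matrix ring. -/
def heisX : (Matrix (Fin 3) (Fin 3) ℤ)ˣ where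
  val := 1 + Matrix.single 0 1 1
  inv := 1 - Matrix.single 0 1 1
  val_inv := by
    have h : Matrix.single (0 : Fin 3) (1 : Fin 3) (1 : ℤ)
        * Matrix.single (0 : Fin 3) (1 : Fin 3) (1 : ℤ) = 0 :=
      Matrix.single_mul_single_of_ne (c := 1) 0 1 0 (by decide) 1
    noncomm_ring [h]
  inv_val := by
    have h : Matrix.single (0 : Fin 3) (1 : Fin 3) (1 : ℤ)
        * Matrix.single (0 : Fin 3) (1 : Fin 3) (1 : ℤ) = 0 :=
      Matrix.single_mul_single_of_ne (c := 1) 0 1 0 (by decide) 1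
    noncomm_ring [h]

/-- `I + E₂₃` as a unit of the `3×3` integer matrix ring. -/
def heisY : (Matrix (Fin 3) (Fin 3) ℤ)ˣ where
  val := 1 + Matrix.single 1 2 1
  inv := 1 - Matrix.single 1 2 1
  val_inv := by
    have h : Matrix.single (1 : Fin 3) (2 : Fin 3) (1 : ℤ)
        * Matrix.single (1 : Fin 3) (2 : Fin 3) (1 : ℤ) = 0 :=
      Matrix.single_mul_single_of_ne (c := 1) 1 2 1 (by decide) 1
    noncomm_ring [h]
  inv_val := by
    have h : Matrix.single (1 : Fin 3) (2 : Fin 3) (1 : ℤ)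
        * Matrix.single (1 : Fin 3) (2 : Fin 3) (1 : ℤ) = 0 :=
      Matrix.single_mul_single_of_ne (c := 1) 1 2 1 (by decide) 1
    noncomm_ring [h]

/-- The homomorphism `F₂ → H₃(ℤ)` sending `x₁ ↦ I + E₁₂` and `x₂ ↦ I + E₂₃`; both images
lie in the group of upper unitriangular `3×3` integer matrices. -/
def heisHom : FreeGroup (Fin 2) →* (Matrix (Fin 3) (Fin 3) ℤ)ˣ :=
  FreeGroup.lift fun i => if i = 0 then heisX else heisY

/-- Explicit upper unitriangular matrix. -/
def hmat (a b c : ℤ) : Matrix (Fin 3) (Fin 3) ℤ := !![1, a, b; 0, 1, c; 0, 0, 1]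

lemma hmat_mul (a b c a' b' c' : ℤ) :
    hmat a b c * hmat a' b' c' = hmat (a + a') (b + b' + a * c') (c + c') := by
  ext i j
  fin_cases i <;> fin_cases j <;>
    simp [hmat, Matrix.mul_apply, Fin.sum_univ_three, Matrix.vecHead, Matrix.vecTail] <;> ring

lemma hmat_eq_one_iff (a b c : ℤ) : hmat a b c = 1 ↔ a = 0 ∧ b = 0 ∧ c = 0 := by
  constructor
  · intro h
    refine ⟨?_, ?_, ?_⟩
    · have := congrFun (congrFun h 0) 1; simpa [hmat, Matrix.one_apply] using this
    · have := congrFun (congrFun h 0) 2; simpa [hmat, Matrix.one_apply] using this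
    · have := congrFun (congrFun h 1) 2; simpa [hmat, Matrix.one_apply] using this
  · rintro ⟨ha, hb, hc⟩
    subst ha; subst hb; subst hc
    ext i j
    fin_cases i <;> fin_cases j <;> simp [hmat, Matrix.one_apply, Matrix.vecHead, Matrix.vecTail]

lemma areaIJ_shift (d : ℕ) (i j : Fin d) (w : List (Fin d × Bool)) :
    ∀ p q : Pt d, areaIJ d i j (p + q) w = areaIJ d i j q w + p i * disp d w j := by
  induction w with
  | nil => intro p q; simp [areaIJ, disp]
  | cons s rest ih =>
    intro p q
    have hstep : stepFn d (p + q) s = p + stepFn d q s := by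
      simp [stepFn]; abel
    simp only [areaIJ, hstep, ih p (stepFn d q s), disp, List.map_cons, List.sum_cons]
    have hd : disp d (s :: rest) j
        = (if s.2 then latE d s.1 else -latE d s.1) j + disp d rest j := by
      simp [disp]
    by_cases hj : s.1 = j
    · subst hj
      by_cases hb : s.2 <;> simp [hb, latE, Pi.add_apply] <;> ring
    · by_cases hb : s.2 <;> simp [hb, hj, Ne.symm hj, latE, Pi.add_apply] <;> ring

lemma heisX_val : heisX.val = hmat 1 0 0 := by
  ext i j
  fin_cases i <;> fin_cases j <;>
    simp [heisX, hmat, Matrix.single, Matrix.one_apply, Matrix.vecHead, Matrix.vecTail]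

lemma heisX_inv_val : (heisX⁻¹ : (Matrix (Fin 3) (Fin 3) ℤ)ˣ).val = hmat (-1) 0 0 := by
  show heisX.inv = _
  ext i j
  fin_cases i <;> fin_cases j <;>
    simp [heisX, hmat, Matrix.single, Matrix.one_apply, Matrix.vecHead, Matrix.vecTail]

lemma heisY_val : heisY.val = hmat 0 0 1 := by
  ext i j
  fin_cases i <;> fin_cases j <;>
    simp [heisY, hmat, Matrix.single, Matrix.one_apply, Matrix.vecHead, Matrix.vecTail]

lemma heisY_inv_val : (heisY⁻¹ : (Matrix (Fin 3) (Fin 3) ℤ)ˣ).val = hmat 0 0 (-1) := by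
  show heisY.inv = _
  ext i j
  fin_cases i <;> fin_cases j <;>
    simp [heisY, hmat, Matrix.single, Matrix.one_apply, Matrix.vecHead, Matrix.vecTail]

lemma mk_singleton_false (i : Fin 2) :
    FreeGroup.mk [(i, false)] = (FreeGroup.of i)⁻¹ := by
  rw [show FreeGroup.of i = FreeGroup.mk [(i, true)] from rfl, FreeGroup.inv_mk]
  simp [FreeGroup.invRev]

lemma heisHom_val (w : List (Fin 2 × Bool)) :
    (heisHom (FreeGroup.mk w)).val
      = hmat (disp 2 w 0) (areaIJ 2 0 1 0 w) (disp 2 w 1) := by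
  induction w with
  | nil =>
    show ((heisHom 1 : (Matrix (Fin 3) (Fin 3) ℤ)ˣ) : Matrix (Fin 3) (Fin 3) ℤ) = _
    rw [map_one]
    simp only [disp, List.map_nil, List.sum_nil, areaIJ]
    symm
    rw [show (0 : Pt 2) 0 = 0 from rfl, show (0 : Pt 2) 1 = 0 from rfl]
    exact (hmat_eq_one_iff 0 0 0).mpr ⟨rfl, rfl, rfl⟩
  | cons s rest ih =>
    have hmk : FreeGroup.mk (s :: rest) = FreeGroup.mk [s] * FreeGroup.mk rest := by
      rw [FreeGroup.mul_mk]; rfl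
    have hs : (heisHom (FreeGroup.mk [s])).val
        = hmat ((if s.2 then latE 2 s.1 else -latE 2 s.1) 0) 0
               ((if s.2 then latE 2 s.1 else -latE 2 s.1) 1) := by
      have h0 : heisHom (FreeGroup.of 0) = heisX := by simp [heisHom]
      have h1 : heisHom (FreeGroup.of 1) = heisY := by simp [heisHom]
      obtain ⟨i, b⟩ := s
      fin_cases i <;> cases b
      · show (heisHom (FreeGroup.mk [((0 : Fin 2), false)])).val = _
        rw [mk_singleton_false 0, map_inv, h0, heisX_inv_val]
        try simp [latE]
      · show (heisHom (FreeGroup.mk [((0 : Fin 2), true)])).val = _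
        rw [show FreeGroup.mk [((0 : Fin 2), true)] = FreeGroup.of 0 from rfl, h0, heisX_val]
        try simp [latE]
      · show (heisHom (FreeGroup.mk [((1 : Fin 2), false)])).val = _
        rw [mk_singleton_false 1, map_inv, h1, heisY_inv_val]
        try simp [latE]
      · show (heisHom (FreeGroup.mk [((1 : Fin 2), true)])).val = _
        rw [show FreeGroup.mk [((1 : Fin 2), true)] = FreeGroup.of 1 from rfl, h1, heisY_val]
        try simp [latE]
    rw [hmk, map_mul, Units.val_mul, hs, ih, hmat_mul]
    have hdisp : ∀ k : Fin 2, disp 2 (s :: rest) k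
        = (if s.2 then latE 2 s.1 else -latE 2 s.1) k + disp 2 rest k := by
      intro k; simp [disp]
    have harea : areaIJ 2 0 1 0 (s :: rest)
        = areaIJ 2 0 1 0 rest
          + (if s.2 then latE 2 s.1 else -latE 2 s.1) 0 * disp 2 rest 1 := by
      have hstep : stepFn 2 0 s = (if s.2 then latE 2 s.1 else -latE 2 s.1) + 0 := by
        simp [stepFn]
      rw [show areaIJ 2 0 1 0 (s :: rest)
          = (if s.1 = 1 then (if s.2 then (0 : Pt 2) 0 else -((0 : Pt 2) 0)) else 0)
            + areaIJ 2 0 1 (stepFn 2 0 s) rest from rfl, hstep,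
        areaIJ_shift 2 0 1 rest]
      simp
    rw [hdisp 0, hdisp 1, harea]
    ring_nf

/-- A word `w` in `{x₁^{±1}, x₂^{±1}}` lies in the kernel of the
homomorphism `F₂ → H₃(ℤ)`, `x₁ ↦ I + E₁₂`, `x₂ ↦ I + E₂₃`, if and only if its lattice
path is closed and its algebraic area `A(w) = Σ ε_k (p_{k-1})₁` (summed over the steps in
the second coordinate direction) vanishes. -/
theorem heisenberg_kernel_iff_closed_and_zero_area (w : List (Fin 2 × Bool)) :
    heisHom (FreeGroup.mk w) = 1
      ↔ disp 2 w = 0 ∧ areaIJ 2 0 1 0 w = 0 := by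
  rw [Units.ext_iff, Units.val_one, heisHom_val, hmat_eq_one_iff]
  constructor
  · rintro ⟨h0, hb, h1⟩
    refine ⟨funext fun k => ?_, hb⟩
    fin_cases k
    · exact h0
    · exact h1
  · rintro ⟨hd, hb⟩
    exact ⟨by rw [hd]; rfl, hb, by rw [hd]; rfl⟩
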